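/- Let T > 0, ε₀ ∈ (0,1), c > 0, and set k₀ = ⌊4/ε₀⌋ + 1. Let F : [0,T] → [0,∞) be integrable and let Σ₁ ⊆ [0,T] be a measurable set with Lebesgue measure |Σ₁| = ε₀ T such that F(t) ≥ c for all t ∈ Σ₁. Then for every τ with 0 < τ < ε₀T/2 there exists t₀ ∈ Σ₁ with t₀ + τ ≤ T such that (1/τ) ∫_{t₀}^{t₀+τ} F(t) dt ≥ 2c/k₀. -/

import Mathlib

/-!
Only points of `A = S₁ ∩ [0, T - τ]` can start a window inside `[0, T]`, and
`|A| ≥ ε₀T - τ > ε₀T/2`. Cutting `[0, T)` into `n = ⌊T/τ⌋` intervals of length `τ`, one of them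
meets `A` in measure at least `|A|/n ≥ |A|τ/T > ε₀τ/2 > 2τ/k₀` (as `ε₀k₀ > 4`). A window starting
at a point of that piece close enough to its infimum still contains more than `2τ/k₀` of `A`, and
`F ≥ c` on `S₁` turns this measure into the bound on the integral.
-/

open MeasureTheory Set

lemma Ico_zero_mul_subset_biUnion_Ico {τ : ℝ} (hτ : 0 < τ) (n : ℕ) :
    Ico 0 (n * τ) ⊆ ⋃ j ∈ Finset.range n, Ico (j * τ) ((j + 1) * τ) := by
  intro x ⟨hx0, hxn⟩
  have hxτ : 0 ≤ x / τ := div_nonneg hx0 hτ.le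
  refine mem_biUnion (x := ⌊x / τ⌋₊) ?_ ⟨?_, ?_⟩
  · exact Finset.mem_range.2 ((Nat.floor_lt hxτ).2 ((div_lt_iff₀ hτ).2 hxn))
  · exact (le_div_iff₀ hτ).1 (Nat.floor_le hxτ)
  · exact (div_lt_iff₀ hτ).1 (Nat.lt_floor_add_one _)

lemma exists_volume_real_le_mul_volume_real_inter_Ico {A : Set ℝ} {τ : ℝ} {n : ℕ} (hτ : 0 < τ)
    (hn : n ≠ 0) (hA : A ⊆ Ico 0 (n * τ)) :
    ∃ j < n, volume.real A ≤ n * volume.real (A ∩ Ico (j * τ) ((j + 1) * τ)) := by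
  have hcover : volume.real A ≤ ∑ j ∈ Finset.range n, volume.real (A ∩ Ico (j * τ) ((j + 1) * τ)) :=
    calc volume.real A
        = volume.real (⋃ j ∈ Finset.range n, A ∩ Ico (j * τ) ((j + 1) * τ)) := by
          rw [← inter_iUnion₂, inter_eq_left.2 (hA.trans (Ico_zero_mul_subset_biUnion_Ico hτ n))]
      _ ≤ _ := measureReal_biUnion_finset_le _ _
  obtain ⟨j, hj, hle⟩ := Finset.exists_le_of_sum_le (s := Finset.range n)
    (Finset.nonempty_range_iff.2 hn) (f := fun _ ↦ volume.real A)
    (g := fun j : ℕ ↦ n * volume.real (A ∩ Ico (j * τ) ((j + 1) * τ)))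
    (by simpa [← Finset.mul_sum] using mul_le_mul_of_nonneg_left hcover n.cast_nonneg)
  exact ⟨j, Finset.mem_range.1 hj, hle⟩

lemma exists_mem_lt_volume_real_inter_Ici {B : Set ℝ} (hB : Bornology.IsBounded B) {r : ℝ}
    (hr0 : 0 ≤ r) (hr : r < volume.real B) : ∃ t ∈ B, r < volume.real (B ∩ Ici t) := by
  have hne : B.Nonempty := nonempty_iff_ne_empty.2 fun hempty ↦ by
    rw [hempty, measureReal_empty] at hr
    linarith
  obtain ⟨t, htB, ht⟩ := Real.lt_sInf_add_pos hne (sub_pos.2 hr)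
  have hinf : sInf B ≤ t := csInf_le hB.bddBelow htB
  refine ⟨t, htB, ?_⟩
  have : volume.real B ≤ volume.real (B ∩ Ici t) + (t - sInf B) :=
    calc volume.real B ≤ volume.real (B ∩ Ici t ∪ Ico (sInf B) t) := by
          refine measureReal_mono (fun x hx ↦ ?_)
            ((hB.subset inter_subset_left).union (Metric.isBounded_Ico _ _)).measure_lt_top.ne
          rcases le_or_gt t x with htx | hxt
          · exact .inl ⟨hx, htx⟩
          · exact .inr ⟨csInf_le hB.bddBelow hx, hxt⟩
      _ ≤ _ := (measureReal_union_le _ _).trans_eq (by rw [Real.volume_real_Ico_of_le hinf])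
  linarith

lemma exists_mem_lt_volume_real_inter_Icc_add_of_subset_Ico {A : Set ℝ} {τ r : ℝ} {n : ℕ}
    (hτ : 0 < τ) (hn : n ≠ 0) (hA : A ⊆ Ico 0 (n * τ)) (hr0 : 0 ≤ r) (hr : n * r < volume.real A) :
    ∃ t ∈ A, r < volume.real (A ∩ Icc t (t + τ)) := by
  obtain ⟨j, -, hj⟩ := exists_volume_real_le_mul_volume_real_inter_Ico hτ hn hA
  have hB : Bornology.IsBounded (A ∩ Ico (j * τ) ((j + 1) * τ)) :=
    (Metric.isBounded_Ico _ _).subset inter_subset_right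
  have hrB : r < volume.real (A ∩ Ico (j * τ) ((j + 1) * τ)) :=
    lt_of_mul_lt_mul_left (hr.trans_le hj) n.cast_nonneg
  obtain ⟨t, ⟨htA, htj, -⟩, ht⟩ := exists_mem_lt_volume_real_inter_Ici hB hr0 hrB
  refine ⟨t, htA, ht.trans_le (measureReal_mono ?_
    ((Metric.isBounded_Icc t (t + τ)).subset inter_subset_right).measure_lt_top.ne)⟩
  rintro x ⟨⟨hxA, -, hxj⟩, htx⟩
  exact ⟨hxA, htx, by linarith⟩

lemma exists_mem_lt_volume_real_inter_Icc_add {A : Set ℝ} {L τ r : ℝ} (hτ : 0 < τ) (hL : 0 ≤ L)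
    (hA : A ⊆ Icc 0 L) (hr0 : 0 ≤ r) (hr : (L + τ) * r < τ * volume.real A) :
    ∃ t ∈ A, r < volume.real (A ∩ Icc t (t + τ)) := by
  set n := ⌊(L + τ) / τ⌋₊
  have hn : n ≠ 0 := (Nat.floor_pos.2 ((one_le_div hτ).2 (by linarith))).ne'
  have hnτ : n * τ ≤ L + τ := (le_div_iff₀ hτ).1 (Nat.floor_le (by positivity))
  have hLn : L + τ < (n + 1) * τ := (div_lt_iff₀ hτ).1 (Nat.lt_floor_add_one _)
  refine exists_mem_lt_volume_real_inter_Icc_add_of_subset_Ico hτ hn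
    (fun x hx ↦ ⟨(hA hx).1, by linarith [(hA hx).2]⟩) hr0 ?_
  have : τ * (n * r) ≤ τ * volume.real A := by nlinarith
  nlinarith

lemma volume_real_le_volume_real_inter_Icc_add {s : Set ℝ} {a b c : ℝ} (hs : s ⊆ Icc a b)
    (hcb : c ≤ b) : volume.real s ≤ volume.real (s ∩ Icc a c) + (b - c) :=
  calc volume.real s ≤ volume.real (s ∩ Icc a c ∪ Ioc c b) := by
        refine measureReal_mono (fun x hx ↦ ?_)
          (((Metric.isBounded_Icc a b).subset (inter_subset_left.trans hs)).union
            (Metric.isBounded_Ioc _ _)).measure_lt_top.ne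
        rcases le_or_gt x c with hxc | hcx
        · exact .inl ⟨hx, (hs hx).1, hxc⟩
        · exact .inr ⟨hcx, (hs hx).2⟩
    _ ≤ _ := (measureReal_union_le _ _).trans_eq (by rw [Real.volume_real_Ioc_of_le hcb])

lemma mul_measureReal_le_setIntegral {α : Type*} [MeasurableSpace α] {μ : Measure α}
    {F : α → ℝ} {S s : Set α} {c : ℝ} (hS : MeasurableSet S) (hSs : S ⊆ s) (hSfin : μ S ≠ ⊤)
    (hF : IntegrableOn F s μ) (hF0 : 0 ≤ᵐ[μ.restrict s] F) (hc : ∀ t ∈ S, c ≤ F t) :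
    c * μ.real S ≤ ∫ t in s, F t ∂μ :=
  (setIntegral_ge_of_const_le_real hS hSfin hc (hF.mono_set hSs)).trans
    (setIntegral_mono_set hF hF0 hSs.eventuallyLE)

lemma lt_mul_floor_div_add_one {a ε : ℝ} (hε : 0 < ε) : a < ε * (⌊a / ε⌋₊ + 1) :=
  (div_lt_iff₀' hε).1 (Nat.lt_floor_add_one _)

/-- the time-interval pigeonhole claim.  If `F ≥ 0` is integrable on `[0,T]`,
`S₁ ⊆ [0,T]` has measure `ε₀ T` and `F ≥ c` on `S₁`, then for every `0 < τ < ε₀T/2`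
there is `t₀ ∈ S₁` with `t₀ + τ ≤ T` on whose right `τ`-window the average of `F`
is at least `2c/k₀`, where `k₀ = ⌊4/ε₀⌋ + 1`. -/
theorem pigeonhole_time_window
    (T ε₀ c : ℝ) (hT : 0 < T) (hε₀ : 0 < ε₀) (hε₀' : ε₀ < 1) (hc : 0 < c)
    (k₀ : ℕ) (hk₀ : k₀ = ⌊(4 : ℝ) / ε₀⌋₊ + 1)
    (F : ℝ → ℝ) (hFpos : ∀ t, 0 ≤ F t) (hFint : MeasureTheory.IntegrableOn F (Set.Icc 0 T))
    (S₁ : Set ℝ) (hmeas : MeasurableSet S₁) (hsub : S₁ ⊆ Set.Icc 0 T)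
    (hvol : (MeasureTheory.volume S₁).toReal = ε₀ * T)
    (hlow : ∀ t ∈ S₁, c ≤ F t)
    (τ : ℝ) (hτ0 : 0 < τ) (hτ : τ < ε₀ * T / 2) :
    ∃ t₀ ∈ S₁, t₀ + τ ≤ T ∧
      2 * c / (k₀ : ℝ) ≤ (1 / τ) * ∫ t in Set.Icc t₀ (t₀ + τ), F t := by
  have hτT : τ < T := by nlinarith
  have hk₀ε₀ : 4 < ε₀ * k₀ := by
    rw [hk₀]; push_cast; exact lt_mul_floor_div_add_one hε₀
  have hk₀pos : (0 : ℝ) < k₀ := by rw [hk₀]; positivity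
  set A := S₁ ∩ Icc 0 (T - τ)
  have hvolA : ε₀ * T - τ ≤ volume.real A := by
    have := volume_real_le_volume_real_inter_Icc_add hsub (sub_le_self T hτ0.le)
    rw [measureReal_def, hvol] at this
    linarith
  have hr : (T - τ + τ) * (2 * τ / k₀) < τ * volume.real A :=
    calc (T - τ + τ) * (2 * τ / k₀) = τ * (2 * T / k₀) := by ring
      _ < τ * (ε₀ * T - τ) := by gcongr; rw [div_lt_iff₀ hk₀pos]; nlinarith
      _ ≤ τ * volume.real A := by gcongr
  obtain ⟨t₀, ⟨ht₀S, ht₀0, ht₀T⟩, hwin⟩ :=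
    exists_mem_lt_volume_real_inter_Icc_add hτ0 (by linarith) inter_subset_right
      (by positivity) hr
  refine ⟨t₀, ht₀S, by linarith, ?_⟩
  have hint := mul_measureReal_le_setIntegral (S := A ∩ Icc t₀ (t₀ + τ)) (c := c)
    ((hmeas.inter measurableSet_Icc).inter measurableSet_Icc) inter_subset_right
    ((Metric.isBounded_Icc t₀ (t₀ + τ)).subset inter_subset_right).measure_lt_top.ne
    (hFint.mono_set (Icc_subset_Icc ht₀0 (by linarith))) (ae_of_all _ hFpos)
    (fun t ht ↦ hlow t ht.1.1)
  calc 2 * c / k₀ = 1 / τ * (c * (2 * τ / k₀)) := by field_simp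
    _ ≤ 1 / τ * ∫ t in Icc t₀ (t₀ + τ), F t := by
      gcongr
      exact (mul_le_mul_of_nonneg_left hwin.le hc.le).trans hint
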